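/- arXiv:cs/0502085 — 4 statements merged into one kernel-verified Lean document; each statement's English description precedes it below -/
import Mathlib

section
/- For each p ∈ (0,1) the equation T = (1-p)^T(T+1) + (1-(1-p)^T)(T/2) has a solution T(p) > 0, and as p → 0⁺ this solution satisfies T(p)·√(p/2) → 1, i.e., T(p) ~ √(2/p). -/
open Filter Real

-- key inequalities from the simplified fixed point equation
lemma gkan_key (p T : ℝ) (hp0 : 0 < p) (hp1 : p < 1) (hT : 0 < T)
    (heq : (1 - p) ^ T * (T + 2) = T) :
    T ^ 2 * p ≤ 2 ∧ 2 * (1 - p) ≤ T * (T + 2) * p := by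
  have hq0 : (0:ℝ) < 1 - p := by linarith
  have hT2 : (0:ℝ) < T + 2 := by linarith
  have hrpos : 0 < (1 - p) ^ T := Real.rpow_pos_of_pos hq0 T
  have hlogeq : T * Real.log (1 - p) + Real.log (T + 2) = Real.log T := by
    rw [← Real.log_rpow hq0, ← Real.log_mul (ne_of_gt hrpos) (ne_of_gt hT2), heq]
  have hmain : T * Real.log (1 - p) = - Real.log ((T + 2) / T) := by
    rw [Real.log_div (ne_of_gt hT2) (ne_of_gt hT)]
    linarith
  have hlog1 : Real.log (1 - p) ≤ -p := by
    have := Real.log_le_sub_one_of_pos hq0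
    linarith
  have hlog2 : -(p / (1 - p)) ≤ Real.log (1 - p) := by
    have h := Real.log_le_sub_one_of_pos (inv_pos.mpr hq0)
    rw [Real.log_inv] at h
    have e : (1 - p)⁻¹ - 1 = p / (1 - p) := by field_simp; ring
    rw [e] at h
    linarith
  have hu0 : (0:ℝ) < (T + 2) / T := div_pos hT2 hT
  have hlogu1 : Real.log ((T + 2) / T) ≤ 2 / T := by
    have h := Real.log_le_sub_one_of_pos hu0
    have e : (T + 2) / T - 1 = 2 / T := by field_simp; ring
    rw [e] at h
    exact h
  have hlogu2 : 2 / (T + 2) ≤ Real.log ((T + 2) / T) := by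
    have h := Real.log_le_sub_one_of_pos (div_pos hT hT2)
    have e : Real.log (T / (T + 2)) = - Real.log ((T + 2) / T) := by
      rw [Real.log_div (ne_of_gt hT) (ne_of_gt hT2),
          Real.log_div (ne_of_gt hT2) (ne_of_gt hT)]
      ring
    have e2 : T / (T + 2) - 1 = -(2 / (T + 2)) := by field_simp; ring
    rw [e, e2] at h
    linarith
  constructor
  · have h1 : T * p ≤ 2 / T := by nlinarith
    have := (le_div_iff₀ hT).mp h1
    nlinarith
  · have h1 : 2 / (T + 2) ≤ T * (p / (1 - p)) := by nlinarith
    rw [div_le_iff₀ hT2] at h1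
    have h2 := mul_le_mul_of_nonneg_right h1 hq0.le
    have e : T * (p / (1 - p)) * (T + 2) * (1 - p) = T * (T + 2) * p := by
      field_simp
    rw [e] at h2
    linarith

theorem gkan_fixed_point_exists_and_asymptotics :
    (∀ p ∈ Set.Ioo (0 : ℝ) 1, ∃ T : ℝ, 0 < T ∧
        T = (1 - p) ^ T * (T + 1) + (1 - (1 - p) ^ T) * (T / 2)) ∧
    ∀ T : ℝ → ℝ,
      (∀ p ∈ Set.Ioo (0 : ℝ) 1, 0 < T p ∧
        T p = (1 - p) ^ (T p) * (T p + 1) + (1 - (1 - p) ^ (T p)) * (T p / 2)) →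
      Tendsto (fun p : ℝ => T p * Real.sqrt (p / 2))
        (nhdsWithin 0 (Set.Ioi 0)) (nhds 1) := by
  constructor
  · rintro p ⟨hp0, hp1⟩
    have hq0 : (0:ℝ) < 1 - p := by linarith
    set g : ℝ → ℝ := fun t => (1 - p) ^ t * (t + 2) - t with hg
    have hcont : Continuous g := by
      have h1 : Continuous (fun t : ℝ => (1 - p) ^ t) := by
        have e : (fun t : ℝ => (1 - p) ^ t) = fun t => Real.exp (Real.log (1 - p) * t) := by
          funext t
          rw [Real.rpow_def_of_pos hq0, mul_comm]
        rw [e]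
        exact Real.continuous_exp.comp (continuous_const.mul continuous_id)
      exact (h1.mul (continuous_id.add continuous_const)).sub continuous_id
    set M : ℝ := 2 / p with hM
    have hMpos : 0 < M := div_pos two_pos hp0
    have hM2 : 2 < M := by
      rw [hM, lt_div_iff₀ hp0]; nlinarith
    have hg0 : g 0 = 2 := by simp [hg, Real.rpow_zero]
    have hgM : g M < 0 := by
      have hlog1 : Real.log (1 - p) ≤ -p := by
        have := Real.log_le_sub_one_of_pos hq0; linarith
      have hMp : M * p = 2 := by rw [hM]; field_simp
      have hMlog : M * Real.log (1 - p) ≤ -2 := by nlinarith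
      have hexp : (1 - p) ^ M ≤ Real.exp (-2) := by
        rw [Real.rpow_def_of_pos hq0, mul_comm]
        exact Real.exp_le_exp.mpr hMlog
      have h3 : Real.exp (-2) ≤ 1/3 := by
        rw [Real.exp_neg]
        have h32 : (3:ℝ) ≤ Real.exp 2 := by
          have := Real.add_one_le_exp (2:ℝ); linarith
        have := inv_anti₀ (by norm_num : (0:ℝ) < 3) h32
        simpa using this
      have hrpos : 0 < (1 - p) ^ M := Real.rpow_pos_of_pos hq0 M
      have : g M = (1 - p) ^ M * (M + 2) - M := rfl
      nlinarith
    have hsub : Set.Icc (g M) (g 0) ⊆ g '' Set.Icc 0 M :=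
      intermediate_value_Icc' hMpos.le hcont.continuousOn
    have h0mem : (0:ℝ) ∈ Set.Icc (g M) (g 0) := ⟨hgM.le, by rw [hg0]; norm_num⟩
    obtain ⟨T, hTmem, hgT⟩ := hsub h0mem
    have hTne : T ≠ 0 := by
      intro h
      rw [h, hg0] at hgT
      norm_num at hgT
    have hTpos : 0 < T := lt_of_le_of_ne hTmem.1 (Ne.symm hTne)
    refine ⟨T, hTpos, ?_⟩
    have heq : (1 - p) ^ T * (T + 2) = T := by
      have : (1 - p) ^ T * (T + 2) - T = 0 := hgT
      linarith
    nlinarith [heq]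
  · intro T hT
    have hIoo : Set.Ioo (0:ℝ) 1 ∈ nhdsWithin (0:ℝ) (Set.Ioi 0) :=
      Ioo_mem_nhdsGT_of_mem (by constructor <;> norm_num)
    -- bounds on s p := T p * sqrt (p/2)
    have hbounds : ∀ p ∈ Set.Ioo (0:ℝ) 1,
        Real.sqrt (1 - p - Real.sqrt (2 * p)) ≤ T p * Real.sqrt (p / 2) ∧
        T p * Real.sqrt (p / 2) ≤ 1 := by
      rintro p ⟨hp0, hp1⟩
      obtain ⟨hTpos, heq0⟩ := hT p ⟨hp0, hp1⟩
      have heq : (1 - p) ^ (T p) * (T p + 2) = T p := by nlinarith [heq0]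
      obtain ⟨key1, key2⟩ := gkan_key p (T p) hp0 hp1 hTpos heq
      set s := T p * Real.sqrt (p / 2) with hs
      have hp2 : (0:ℝ) ≤ p / 2 := by linarith
      have hsq : s ^ 2 = T p ^ 2 * (p / 2) := by
        rw [hs, mul_pow, Real.sq_sqrt hp2]
      have hsnonneg : 0 ≤ s := mul_nonneg hTpos.le (Real.sqrt_nonneg _)
      have hs1 : s ≤ 1 := by nlinarith
      have hTp : T p * p = s * Real.sqrt (2 * p) := by
        rw [hs, mul_assoc, ← Real.sqrt_mul hp2]
        have : p / 2 * (2 * p) = p ^ 2 := by ring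
        rw [this, Real.sqrt_sq hp0.le]
      have hsrt2p : 0 ≤ Real.sqrt (2 * p) := Real.sqrt_nonneg _
      have hTp_le : T p * p ≤ Real.sqrt (2 * p) := by
        rw [hTp]
        nlinarith
      have hsq_lb : 1 - p - Real.sqrt (2 * p) ≤ s ^ 2 := by nlinarith
      constructor
      · calc Real.sqrt (1 - p - Real.sqrt (2 * p)) ≤ Real.sqrt (s ^ 2) :=
              Real.sqrt_le_sqrt hsq_lb
          _ = s := by rw [Real.sqrt_sq hsnonneg]
      · exact hs1
    have hlow : Tendsto (fun p : ℝ => Real.sqrt (1 - p - Real.sqrt (2 * p)))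
        (nhdsWithin 0 (Set.Ioi 0)) (nhds 1) := by
      have hc : Continuous (fun p : ℝ => Real.sqrt (1 - p - Real.sqrt (2 * p))) := by
        apply Real.continuous_sqrt.comp
        exact (continuous_const.sub continuous_id).sub
          (Real.continuous_sqrt.comp (continuous_const.mul continuous_id))
      have := (hc.tendsto 0).mono_left (nhdsWithin_le_nhds (s := Set.Ioi (0:ℝ)))
      simpa using this
    refine tendsto_of_tendsto_of_tendsto_of_le_of_le' hlow tendsto_const_nhds ?_ ?_
    · filter_upwards [hIoo] with p hp
      exact (hbounds p hp).1
    · filter_upwards [hIoo] with p hp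
      exact (hbounds p hp).2
end

section
/- Under the Gkantsidis heuristics mean-field fixed point, as p → 0⁺ the achieved speed-up factor θ_Gkan(p) = T(p)·(1-p)^{T(p)} satisfies θ_Gkan(p)/√(2e·θ_max(p)) → 1, where θ_max(p) = -1/(e·ln(1-p)). In particular, for every ε > 0, θ_Gkan(p) = o(θ_max(p)^{1/2+ε}) as p → 0⁺. -/
open Filter

theorem gkan_speedup_suboptimal (T : ℝ → ℝ)
    (hfix : ∀ p ∈ Set.Ioo (0 : ℝ) 1, 0 < T p ∧
      T p = (1 - p) ^ (T p) * (T p + 1) + (1 - (1 - p) ^ (T p)) * (T p / 2)) :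
    Tendsto
      (fun p : ℝ => (T p * (1 - p) ^ (T p)) /
        Real.sqrt (2 * Real.exp 1 * (-1 / (Real.exp 1 * Real.log (1 - p)))))
      (nhdsWithin 0 (Set.Ioi 0)) (nhds 1) ∧
    ∀ ε : ℝ, 0 < ε →
      Tendsto
        (fun p : ℝ => (T p * (1 - p) ^ (T p)) /
          (-1 / (Real.exp 1 * Real.log (1 - p))) ^ ((1 : ℝ) / 2 + ε))
        (nhdsWithin 0 (Set.Ioi 0)) (nhds 0) := by
  set l := nhdsWithin (0:ℝ) (Set.Ioi 0) with hl
  have hIoo : ∀ᶠ p in l, p ∈ Set.Ioo (0:ℝ) 1 :=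
    Ioo_mem_nhdsGT_of_mem (by constructor <;> norm_num)
  set L : ℝ → ℝ := fun p => -Real.log (1 - p) with hLdef
  -- L tends to 0
  have hLcont : Tendsto L l (nhds 0) := by
    have hc : ContinuousAt L 0 := by
      have h1 : ContinuousAt (fun p : ℝ => 1 - p) 0 := by fun_prop
      have h2 : ContinuousAt Real.log (1 - 0) := Real.continuousAt_log (by norm_num)
      exact ((h2.comp h1).neg : _)
    have : L 0 = 0 := by simp [hLdef]
    simpa [this] using hc.tendsto.mono_left nhdsWithin_le_nhds
  -- key pointwise facts
  have key : ∀ᶠ p in l, 0 < T p ∧ 0 < L p ∧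
      (1 - p) ^ (T p) = T p / (T p + 2) ∧
      T p ≤ Real.sqrt (2 / L p) ∧ Real.sqrt (2 / L p) ≤ T p + 2 := by
    filter_upwards [hIoo] with p hp
    obtain ⟨hp0, hp1⟩ := hp
    obtain ⟨ht, heq⟩ := hfix p ⟨hp0, hp1⟩
    have h1p : (0:ℝ) < 1 - p := by linarith
    have ht2 : (0:ℝ) < T p + 2 := by linarith
    have hLp : 0 < L p := by
      simp only [hLdef]
      exact neg_pos.2 (Real.log_neg (by linarith) (by linarith))
    have hlogL : Real.log (1 - p) = -(L p) := by simp [hLdef]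
    set x := (1 - p) ^ (T p) with hxdef
    have hx : x * (T p + 2) = T p := by linear_combination (-2:ℝ) * heq
    have hxe : x = T p / (T p + 2) := by
      rw [eq_div_iff ht2.ne']; exact hx
    have hlog : T p * Real.log (1 - p) = Real.log (T p / (T p + 2)) := by
      rw [← hxe, hxdef, Real.log_rpow h1p]
    -- lower bound on T*L
    have hB : 2 / (T p + 2) ≤ T p * L p := by
      have h := Real.log_le_sub_one_of_pos (div_pos ht ht2)
      rw [← hlog, hlogL] at h
      have h' : T p / (T p + 2) - 1 = -(2/(T p + 2)) := by field_simp; ring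
      rw [h'] at h
      nlinarith
    -- upper bound on T*L
    have hA : T p * L p ≤ 2 / T p := by
      have h := Real.log_le_sub_one_of_pos (div_pos ht2 ht)
      have hrw : Real.log ((T p + 2)/ T p) = T p * L p := by
        rw [← inv_div, Real.log_inv, ← hlog, hlogL]; ring
      rw [hrw] at h
      have h' : (T p + 2)/ T p - 1 = 2 / T p := by field_simp; ring
      rw [h'] at h
      exact h
    refine ⟨ht, hLp, hxe, ?_, ?_⟩
    · have h2 : T p ^ 2 ≤ 2 / L p := by
        rw [le_div_iff₀ hLp]
        have hmul := mul_le_mul_of_nonneg_left hA ht.le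
        have ht' : T p * (2 / T p) = 2 := by field_simp
        nlinarith
      calc T p = Real.sqrt (T p ^ 2) := (Real.sqrt_sq ht.le).symm
        _ ≤ _ := Real.sqrt_le_sqrt h2
    · have h2 : 2 / L p ≤ (T p + 2) ^ 2 := by
        rw [div_le_iff₀ hLp]
        have hmul := mul_le_mul_of_nonneg_left hB ht2.le
        have ht' : (T p + 2) * (2/(T p + 2)) = 2 := by field_simp
        nlinarith
      calc Real.sqrt (2 / L p) ≤ Real.sqrt ((T p + 2) ^ 2) := Real.sqrt_le_sqrt h2
        _ = T p + 2 := Real.sqrt_sq ht2.le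
  -- 2/L tends to infinity
  have hLpos' : Tendsto L l (nhdsWithin 0 (Set.Ioi 0)) := by
    apply tendsto_nhdsWithin_of_tendsto_nhds_of_eventually_within _ hLcont
    filter_upwards [key] with p hk
    exact hk.2.1
  have h2L : Tendsto (fun p => 2 / L p) l atTop := by
    have := hLpos'.inv_tendsto_nhdsGT_zero
    have h2 := this.const_mul_atTop (two_pos (α := ℝ))
    simpa [div_eq_mul_inv] using h2
  have hsinf : Tendsto (fun p => Real.sqrt (2 / L p)) l atTop := by
    have := (tendsto_rpow_atTop (by norm_num : (0:ℝ) < 1/2)).comp h2L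
    refine this.congr fun p => ?_
    exact (Real.sqrt_eq_rpow _).symm
  -- T tends to infinity
  have hTinf : Tendsto T l atTop := by
    apply tendsto_atTop_mono' l ?_ (tendsto_atTop_add_const_right _ (-2) hsinf)
    filter_upwards [key] with p hk
    have := hk.2.2.2.2
    linarith
  -- ratio t/(t+2) tends to 1 at infinity
  have h_ratio : Tendsto (fun t : ℝ => t / (t + 2)) atTop (nhds 1) := by
    have h0 : Tendsto (fun t : ℝ => 2 / (t + 2)) atTop (nhds 0) :=
      Filter.Tendsto.div_atTop tendsto_const_nhds
        (tendsto_atTop_add_const_right _ 2 tendsto_id)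
    have h1 : Tendsto (fun t : ℝ => 1 - 2 / (t + 2)) atTop (nhds (1 - 0)) :=
      tendsto_const_nhds.sub h0
    rw [sub_zero] at h1
    refine h1.congr' ?_
    filter_upwards [eventually_gt_atTop (0:ℝ)] with t ht
    field_simp
    ring
  have hg₂ : Tendsto (fun p => T p / (T p + 2)) l (nhds 1) := h_ratio.comp hTinf
  have hg₁ : Tendsto (fun p => (T p / (T p + 2)) ^ 2) l (nhds 1) := by
    simpa using hg₂.pow 2
  constructor
  · apply tendsto_of_tendsto_of_tendsto_of_le_of_le' hg₁ hg₂
    · filter_upwards [key, hIoo] with p hk hp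
      obtain ⟨ht, hLp, hxe, hts, hst⟩ := hk
      obtain ⟨hp0, hp1⟩ := hp
      have hlogne : Real.log (1 - p) ≠ 0 := by
        have : Real.log (1 - p) = -(L p) := by simp [hLdef]
        rw [this]; exact neg_ne_zero.2 hLp.ne'
      have hlogne' : Real.log (1 - p) ≠ 0 := (Real.log_neg (by linarith) (by linarith)).ne
      have hsarg : 2 * Real.exp 1 * (-1 / (Real.exp 1 * Real.log (1 - p))) = 2 / L p := by
        have he := Real.exp_ne_zero 1
        simp only [hLdef]
        field_simp
      rw [hsarg, hxe]
      have ht2 : (0:ℝ) < T p + 2 := by linarith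
      have hs_pos : 0 < Real.sqrt (2 / L p) := Real.sqrt_pos.2 (div_pos two_pos hLp)
      have hrw : T p * (T p / (T p + 2)) / Real.sqrt (2 / L p)
          = T p ^ 2 / ((T p + 2) * Real.sqrt (2 / L p)) := by
        rw [mul_div_assoc', div_div, ← pow_two]
      rw [hrw, div_pow]
      have hsq : (T p + 2) ^ 2 = (T p + 2) * (T p + 2) := sq (T p + 2)
      rw [hsq]
      apply div_le_div_of_nonneg_left (by positivity) (by positivity)
      exact mul_le_mul_of_nonneg_left hst ht2.le
    · filter_upwards [key, hIoo] with p hk hp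
      obtain ⟨ht, hLp, hxe, hts, hst⟩ := hk
      obtain ⟨hp0, hp1⟩ := hp
      have hlogne' : Real.log (1 - p) ≠ 0 := (Real.log_neg (by linarith) (by linarith)).ne
      have hsarg : 2 * Real.exp 1 * (-1 / (Real.exp 1 * Real.log (1 - p))) = 2 / L p := by
        have he := Real.exp_ne_zero 1
        simp only [hLdef]
        field_simp
      rw [hsarg, hxe]
      have ht2 : (0:ℝ) < T p + 2 := by linarith
      have hs_pos : 0 < Real.sqrt (2 / L p) := Real.sqrt_pos.2 (div_pos two_pos hLp)
      have hrw : T p * (T p / (T p + 2)) / Real.sqrt (2 / L p)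
          = T p ^ 2 / ((T p + 2) * Real.sqrt (2 / L p)) := by
        rw [mul_div_assoc', div_div, ← pow_two]
      rw [hrw]
      have hfin : T p ^ 2 / ((T p + 2) * T p) = T p / (T p + 2) := by
        field_simp
      calc T p ^ 2 / ((T p + 2) * Real.sqrt (2 / L p))
          ≤ T p ^ 2 / ((T p + 2) * T p) := by
            apply div_le_div_of_nonneg_left (by positivity) (by positivity)
            exact mul_le_mul_of_nonneg_left hts ht2.le
        _ = T p / (T p + 2) := hfin
  · intro ε hε
    set C := Real.sqrt 2 * Real.exp 1 ^ ((1:ℝ)/2 + ε) with hC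
    have hLε : Tendsto (fun p => (L p) ^ ε) l (nhds 0) := by
      have hc : ContinuousAt (fun x : ℝ => x ^ ε) 0 :=
        Real.continuousAt_rpow_const 0 ε (Or.inr hε.le)
      have := hc.tendsto.comp hLcont
      simpa [Function.comp_def, Real.zero_rpow hε.ne'] using this
    have hB0 : Tendsto (fun p => C * (L p) ^ ε) l (nhds 0) := by
      simpa using hLε.const_mul C
    apply tendsto_of_tendsto_of_tendsto_of_le_of_le' tendsto_const_nhds hB0
    · filter_upwards [key, hIoo] with p hk hp
      obtain ⟨ht, hLp, hxe, hts, hst⟩ := hk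
      obtain ⟨hp0, hp1⟩ := hp
      have h1p : (0:ℝ) < 1 - p := by linarith
      have hbase : 0 < -1 / (Real.exp 1 * Real.log (1 - p)) := by
        have hlneg : Real.log (1 - p) < 0 := Real.log_neg (by linarith) (by linarith)
        apply div_pos_of_neg_of_neg (by norm_num)
        exact mul_neg_of_pos_of_neg (Real.exp_pos 1) hlneg
      exact div_nonneg (mul_nonneg ht.le (Real.rpow_nonneg h1p.le _))
        (Real.rpow_nonneg hbase.le _)
    · filter_upwards [key, hIoo] with p hk hp
      obtain ⟨ht, hLp, hxe, hts, hst⟩ := hk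
      obtain ⟨hp0, hp1⟩ := hp
      have hbase : -1 / (Real.exp 1 * Real.log (1 - p)) = 1 / (Real.exp 1 * L p) := by
        have hlog : Real.log (1 - p) = -(L p) := by simp [hLdef]
        rw [hlog]
        have he := Real.exp_ne_zero 1
        field_simp
      rw [hbase, hxe]
      have heLpos : 0 < Real.exp 1 * L p := mul_pos (Real.exp_pos 1) hLp
      have hE : (1 / (Real.exp 1 * L p)) ^ ((1:ℝ)/2 + ε)
          = ((Real.exp 1 * L p) ^ ((1:ℝ)/2 + ε))⁻¹ := by
        rw [one_div, Real.inv_rpow heLpos.le]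
      rw [hE, div_eq_mul_inv, inv_inv]
      have ht2 : (0:ℝ) < T p + 2 := by linarith
      have h1 : T p * (T p / (T p + 2)) ≤ Real.sqrt (2 / L p) := by
        refine le_trans ?_ hts
        have hle1 : T p / (T p + 2) ≤ 1 := by
          rw [div_le_one ht2]; linarith
        nlinarith
      have hLhalf : (0:ℝ) < L p ^ ((1:ℝ)/2) := Real.rpow_pos_of_pos hLp _
      have h2 : Real.sqrt (2 / L p) * (Real.exp 1 * L p) ^ ((1:ℝ)/2 + ε)
          = C * (L p) ^ ε := by
        rw [Real.sqrt_div (by norm_num : (0:ℝ) ≤ 2), Real.mul_rpow (Real.exp_pos 1).le hLp.le,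
          Real.rpow_add hLp, hC, Real.sqrt_eq_rpow (L p)]
        field_simp
      calc T p * (T p / (T p + 2)) * (Real.exp 1 * L p) ^ ((1:ℝ)/2 + ε)
          ≤ Real.sqrt (2 / L p) * (Real.exp 1 * L p) ^ ((1:ℝ)/2 + ε) :=
            mul_le_mul_of_nonneg_right h1 (Real.rpow_nonneg heLpos.le _)
        _ = C * (L p) ^ ε := h2
end

section
/- In a simple connected graph G, if two vertices v and w are at graph distance at least 3, and (v, v₁, ..., v_{l-1}, w) is a shortest path from v to w, then swapping the edges (v,v₁) and (w,v_{l-1}) into (v,v_{l-1}) and (w,v₁) yields a graph that is still simple (the two new edges were not previously present) and connected, and has the same degree sequence. -/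
open SimpleGraph

/-- Extract the middle part of a path as a walk from the penultimate vertex to
the second vertex, avoiding both endpoints. -/
lemma edge_swap_exists_middle_walk {V : Type*} {G : SimpleGraph V} {v w : V}
    (P : G.Walk v w) (hP : P.IsPath) (hlen : 2 ≤ P.length) :
    ∃ r : G.Walk (P.getVert (P.length - 1)) (P.getVert 1),
      v ∉ r.support ∧ w ∉ r.support := by
  cases P with
  | nil => simp at hlen
  | cons hadj q =>
    rename_i x
    rw [SimpleGraph.Walk.cons_isPath_iff] at hP
    obtain ⟨hq, hv⟩ := hP
    have hq1 : 1 ≤ q.length := by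
      simp [SimpleGraph.Walk.length_cons] at hlen; omega
    have hgv1 : (SimpleGraph.Walk.cons hadj q).getVert 1 = x := by
      rw [SimpleGraph.Walk.getVert_cons_succ, SimpleGraph.Walk.getVert_zero]
    have hlc : (SimpleGraph.Walk.cons hadj q).length - 1 = (q.length - 1) + 1 := by
      rw [SimpleGraph.Walk.length_cons]; omega
    have hgv2 : (SimpleGraph.Walk.cons hadj q).getVert
        ((SimpleGraph.Walk.cons hadj q).length - 1) = q.getVert (q.length - 1) := by
      rw [hlc, SimpleGraph.Walk.getVert_cons_succ]
    rw [hgv1, hgv2]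
    -- peel the last edge of q using its reverse
    cases hq' : q.reverse with
    | nil =>
      have : q.length = 0 := by
        have := congrArg SimpleGraph.Walk.length hq'
        simpa using this
      omega
    | cons h2 r =>
      rename_i y
      have hy : y = q.getVert (q.length - 1) := by
        have h1 : q.reverse.getVert 1 = q.getVert (q.length - 1) :=
          SimpleGraph.Walk.getVert_reverse q 1
        rw [hq'] at h1
        rw [SimpleGraph.Walk.getVert_cons_succ, SimpleGraph.Walk.getVert_zero] at h1
        exact h1.symm ▸ rfl
      subst hy
      have hqrev : q.reverse.IsPath := (SimpleGraph.Walk.isPath_reverse_iff q).mpr hq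
      rw [hq', SimpleGraph.Walk.cons_isPath_iff] at hqrev
      refine ⟨r, ?_, hqrev.2⟩
      intro hvr
      apply hv
      have : v ∈ q.reverse.support := by
        rw [hq', SimpleGraph.Walk.support_cons]
        exact List.mem_cons_of_mem _ hvr
      rwa [SimpleGraph.Walk.support_reverse, List.mem_reverse] at this

set_option maxHeartbeats 1600000 in
/-- Core of the edge-swap argument, with abstract second and penultimate vertices. -/
lemma edge_swap_core {V : Type*} [Fintype V] {G : SimpleGraph V}
    (hconn : G.Connected) {v w a b : V}
    (hva : G.Adj v a) (hwb : G.Adj w b)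
    (hvb : ¬ G.Adj v b) (hwa : ¬ G.Adj w a)
    (hvw : v ≠ w) (hvb' : v ≠ b) (haw : a ≠ w) (hab : a ≠ b)
    (r : G.Walk b a) (hrv : v ∉ r.support) (hrw : w ∉ r.support) :
    (SimpleGraph.fromEdgeSet
        ((G.edgeSet \ {s(v, a), s(w, b)}) ∪ {s(v, b), s(w, a)})).Connected ∧
      ∀ x : V,
        ((SimpleGraph.fromEdgeSet
          ((G.edgeSet \ {s(v, a), s(w, b)}) ∪ {s(v, b), s(w, a)})).neighborSet x).ncard =
        (G.neighborSet x).ncard := by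
  set G' := SimpleGraph.fromEdgeSet
      ((G.edgeSet \ {s(v, a), s(w, b)}) ∪ {s(v, b), s(w, a)}) with hG'
  have hvna : v ≠ a := hva.ne
  have hbw : b ≠ w := hwb.ne.symm
  -- adjacency characterization of G'
  have hadj : ∀ x y : V, G'.Adj x y ↔
      ((G.Adj x y ∧ s(x, y) ≠ s(v, a) ∧ s(x, y) ≠ s(w, b)) ∨
        s(x, y) = s(v, b) ∨ s(x, y) = s(w, a)) := by
    intro x y
    rw [hG', SimpleGraph.fromEdgeSet_adj]
    simp only [Set.mem_union, Set.mem_diff, Set.mem_insert_iff, Set.mem_singleton_iff,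
      SimpleGraph.mem_edgeSet]
    constructor
    · rintro ⟨h1 | h2, hne⟩
      · exact Or.inl ⟨h1.1, fun h => h1.2 (Or.inl h), fun h => h1.2 (Or.inr h)⟩
      · exact Or.inr h2
    · rintro (⟨h1, h2, h3⟩ | h | h)
      · exact ⟨Or.inl ⟨h1, by tauto⟩, h1.ne⟩
      · refine ⟨Or.inr (Or.inl h), ?_⟩
        rw [Sym2.eq_iff] at h
        rcases h with ⟨rfl, rfl⟩ | ⟨rfl, rfl⟩
        · exact hvb'
        · exact hvb'.symm
      · refine ⟨Or.inr (Or.inr h), ?_⟩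
        rw [Sym2.eq_iff] at h
        rcases h with ⟨rfl, rfl⟩ | ⟨rfl, rfl⟩
        · exact haw.symm
        · exact haw
  constructor
  · -- connectivity
    have hG'vb : G'.Adj v b := (hadj v b).mpr (Or.inr (Or.inl rfl))
    have hG'wa : G'.Adj w a := (hadj w a).mpr (Or.inr (Or.inr rfl))
    have hredges : ∀ e ∈ r.edges, e ∈ G'.edgeSet := by
      intro e he
      have heG : e ∈ G.edgeSet := r.edges_subset_edgeSet he
      rw [hG', SimpleGraph.edgeSet_fromEdgeSet]
      refine ⟨Or.inl ⟨heG, ?_⟩, G.not_isDiag_of_mem_edgeSet heG⟩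
      intro hmem
      rcases hmem with h | h
      · exact hrv (r.fst_mem_support_of_mem_edges (by rwa [← h]))
      · exact hrw (r.fst_mem_support_of_mem_edges (by rwa [← h]))
    have hba : G'.Reachable b a := ⟨r.transfer G' hredges⟩
    have hva' : G'.Reachable v a := (hG'vb.reachable).trans hba
    have hwb' : G'.Reachable w b := (hG'wa.reachable).trans hba.symm
    haveI : Nonempty V := hconn.nonempty
    refine ⟨fun x y => ?_⟩
    obtain ⟨W⟩ := hconn x y
    induction W with
    | nil => exact SimpleGraph.Reachable.refl _
    | cons h W ih =>
      rename_i p q' _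
      refine SimpleGraph.Reachable.trans ?_ ih
      by_cases h1 : s(p, q') = s(v, a)
      · rw [Sym2.eq_iff] at h1
        rcases h1 with ⟨rfl, rfl⟩ | ⟨rfl, rfl⟩
        · exact hva'
        · exact hva'.symm
      · by_cases h2 : s(p, q') = s(w, b)
        · rw [Sym2.eq_iff] at h2
          rcases h2 with ⟨rfl, rfl⟩ | ⟨rfl, rfl⟩
          · exact hwb'
          · exact hwb'.symm
        · exact ((hadj p q').mpr (Or.inl ⟨h, h1, h2⟩)).reachable
  · -- degrees
    have e1 : a ≠ v := hvna.symm
    have e2 : b ≠ v := hvb'.symm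
    have e3 : w ≠ v := hvw.symm
    have e4 : w ≠ a := haw.symm
    have e5 : b ≠ a := hab.symm
    have e6 : w ≠ b := hbw.symm
    have hnaw : ¬ G.Adj a w := fun h => hwa h.symm
    have hnbv : ¬ G.Adj b v := fun h => hvb h.symm
    intro x
    by_cases hxv : x = v
    · subst hxv
      have hset : G'.neighborSet x = insert b (G.neighborSet x \ {a}) := by
        ext y
        simp only [SimpleGraph.mem_neighborSet, hadj, ne_eq, Sym2.eq_iff, Set.mem_insert_iff,
          Set.mem_diff, Set.mem_singleton_iff]
        clear hadj hG' hconn hrv hrw r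
        tauto
      rw [hset, Set.ncard_def, Set.ncard_def,
        Set.encard_exchange (by simp [hvb]) (by simp [hva])]
    · by_cases hxw : x = w
      · subst hxw
        have hset : G'.neighborSet x = insert a (G.neighborSet x \ {b}) := by
          ext y
          simp only [SimpleGraph.mem_neighborSet, hadj, ne_eq, Sym2.eq_iff, Set.mem_insert_iff,
            Set.mem_diff, Set.mem_singleton_iff]
          clear hadj hG' hconn hrv hrw r
          tauto
        rw [hset, Set.ncard_def, Set.ncard_def,
          Set.encard_exchange (by simp [hwa]) (by simp [hwb])]
      · by_cases hxa : x = a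
        · subst hxa
          have hset : G'.neighborSet x = insert w (G.neighborSet x \ {v}) := by
            ext y
            simp only [SimpleGraph.mem_neighborSet, hadj, ne_eq, Sym2.eq_iff, Set.mem_insert_iff,
              Set.mem_diff, Set.mem_singleton_iff]
            clear hadj hG' hconn hrv hrw r
            tauto
          rw [hset, Set.ncard_def, Set.ncard_def,
            Set.encard_exchange (by simp [hnaw])
              (by simp [hva.symm])]
        · by_cases hxb : x = b
          · subst hxb
            have hset : G'.neighborSet x = insert v (G.neighborSet x \ {w}) := by
              ext y
              simp only [SimpleGraph.mem_neighborSet, hadj, ne_eq, Sym2.eq_iff, Set.mem_insert_iff,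
                Set.mem_diff, Set.mem_singleton_iff]
              tauto
            rw [hset, Set.ncard_def, Set.ncard_def,
              Set.encard_exchange (by simp [hnbv])
                (by simp [hwb.symm])]
          · have hset : G'.neighborSet x = G.neighborSet x := by
              ext y
              simp only [SimpleGraph.mem_neighborSet, hadj, ne_eq, Sym2.eq_iff]
              clear hadj hG' hconn hrv hrw r
              tauto
            rw [hset]

theorem edge_swap_along_shortest_path_valid {V : Type*} [Fintype V]
    (G : SimpleGraph V) (hconn : G.Connected) (v w : V)
    (hdist : 3 ≤ G.dist v w)
    (P : G.Walk v w) (hP : P.IsPath) (hshort : P.length = G.dist v w) :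
    ¬ G.Adj v (P.getVert (P.length - 1)) ∧ ¬ G.Adj w (P.getVert 1) ∧
    ((SimpleGraph.fromEdgeSet
        ((G.edgeSet \ {s(v, P.getVert 1), s(w, P.getVert (P.length - 1))}) ∪
          {s(v, P.getVert (P.length - 1)), s(w, P.getVert 1)})).Connected ∧
      ∀ x : V,
        ((SimpleGraph.fromEdgeSet
          ((G.edgeSet \ {s(v, P.getVert 1), s(w, P.getVert (P.length - 1))}) ∪
            {s(v, P.getVert (P.length - 1)), s(w, P.getVert 1)})).neighborSet x).ncard =
        (G.neighborSet x).ncard) := by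
  have hlen : 3 ≤ P.length := hshort ▸ hdist
  set a := P.getVert 1 with ha
  set b := P.getVert (P.length - 1) with hb
  have hva : G.Adj v a := by
    have := P.adj_getVert_succ (i := 0) (by omega)
    rwa [P.getVert_zero] at this
  have hbw : G.Adj b w := by
    have := P.adj_getVert_succ (i := P.length - 1) (by omega)
    rwa [show P.length - 1 + 1 = P.length by omega, P.getVert_length] at this
  have hvb : ¬ G.Adj v b := by
    intro h
    have := SimpleGraph.dist_le (SimpleGraph.Walk.cons h (SimpleGraph.Walk.cons hbw .nil))
    simp at this
    omega
  have hwa : ¬ G.Adj w a := by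
    intro h
    have := SimpleGraph.dist_le (SimpleGraph.Walk.cons hva (SimpleGraph.Walk.cons h.symm .nil))
    simp at this
    omega
  have hvw : v ≠ w := by
    rintro rfl
    rw [SimpleGraph.dist_self] at hdist
    omega
  have hvb' : v ≠ b := by
    intro h
    have hadj : G.Adj v w := h ▸ hbw
    have := SimpleGraph.dist_le (SimpleGraph.Walk.cons hadj .nil)
    simp at this
    omega
  have haw : a ≠ w := by
    intro h
    have hadj : G.Adj v w := h ▸ hva
    have := SimpleGraph.dist_le (SimpleGraph.Walk.cons hadj .nil)
    simp at this
    omega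
  have hab : a ≠ b := fun h => hvb (h ▸ hva)
  obtain ⟨r, hrv, hrw⟩ := edge_swap_exists_middle_walk P hP (by omega)
  exact ⟨hvb, hwa, edge_swap_core hconn hva hbw.symm hvb hwa hvw hvb' haw hab r hrv hrw⟩
end

section
/- Let G be a finite simple connected graph with n vertices, m edges, and average degree z = 2m/n, and suppose a fraction ρ > 0 of all n(n-1) ordered pairs of distinct vertices are at distance ≥ 3. Then the number of valid edge swaps (swaps preserving simplicity and connectivity) is at least ρ·n(n-1)/8, and hence the probability that a uniformly random ordered pair of distinct edges yields a valid swap is at least ρ·n(n-1)/(8·m(m-1)); in particular, it is at least ρ/(2z(z+1)) when m ≤ n(z+1)/2. -/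
/-- The graph obtained from `G` by swapping the edges `(a,b)` and `(c,d)`
into `(a,d)` and `(c,b)`. -/
def swapGraph {V : Type*} (G : SimpleGraph V) (a b c d : V) : SimpleGraph V :=
  SimpleGraph.fromEdgeSet ((G.edgeSet \ {s(a, b), s(c, d)}) ∪ {s(a, d), s(c, b)})

/-- The swap of `(a,b)` and `(c,d)` into `(a,d)` and `(c,b)` is valid: the two
edges are edges of `G`, and the swapped graph is still simple (the created
edges are no loops and were not already present) and connected. -/
def IsValidSwap {V : Type*} (G : SimpleGraph V) (a b c d : V) : Prop :=
  G.Adj a b ∧ G.Adj c d ∧ a ≠ d ∧ c ≠ b ∧ ¬ G.Adj a d ∧ ¬ G.Adj c b ∧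
    (swapGraph G a b c d).Connected

/-- The set of valid swaps, seen as ordered pairs of edges of `G`. -/
def validSwaps {V : Type*} (G : SimpleGraph V) : Set (Sym2 V × Sym2 V) :=
  {ef | ∃ a b c d : V, ef.1 = s(a, b) ∧ ef.2 = s(c, d) ∧ IsValidSwap G a b c d}

open SimpleGraph

lemma reach_of_reach {V : Type*} {G H : SimpleGraph V}
    (hedge : ∀ x y, G.Adj x y → H.Reachable x y) {x y : V} (p : G.Walk x y) :
    H.Reachable x y := by
  induction p with
  | nil => rfl
  | cons h q ih => exact (hedge _ _ h).trans ih

lemma swap_connected {V : Type*} {G : SimpleGraph V} (hconn : G.Connected)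
    {v b d' w : V} (r : G.Walk b d') (hvb : G.Adj v b) (hdw : G.Adj d' w)
    (hvd : v ≠ d') (hwb : w ≠ b)
    (h1 : s(v, b) ∉ r.edges) (h2 : s(d', w) ∉ r.edges) :
    (swapGraph G v b w d').Connected := by
  set H := swapGraph G v b w d' with hH
  have hr : ∀ e ∈ r.edges, e ∈ H.edgeSet := by
    intro e he
    have : e ∈ G.edgeSet := r.edges_subset_edgeSet he
    rw [hH, swapGraph, edgeSet_fromEdgeSet]
    refine ⟨Set.mem_union_left _ ⟨this, ?_⟩, ?_⟩
    · simp only [Set.mem_insert_iff, Set.mem_singleton_iff]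
      push_neg
      constructor
      · rintro rfl; exact h1 he
      · rintro rfl; exact h2 (by rwa [Sym2.eq_swap])
    · simp only [Sym2.diagSet_eq_setOfPred_isDiag, Set.mem_setOf_eq]
      rw [← Set.mem_setOf_eq (x := e) (p := Sym2.IsDiag), ← Sym2.diagSet_eq_setOfPred_isDiag, ← Sym2.range_diag]
      rintro ⟨x, hx⟩
      exact (G.irrefl (hx ▸ this))
  have hbd : H.Reachable b d' := (r.transfer H hr).reachable
  have hvd' : H.Adj v d' := by
    rw [hH, swapGraph, fromEdgeSet_adj]
    exact ⟨Set.mem_union_right _ (by simp), hvd⟩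
  have hwbadj : H.Adj w b := by
    rw [hH, swapGraph, fromEdgeSet_adj]
    exact ⟨Set.mem_union_right _ (by simp), hwb⟩
  have hedge : ∀ x y, G.Adj x y → H.Reachable x y := by
    intro x y hxy
    by_cases hx1 : s(x, y) = s(v, b)
    · rw [Sym2.eq_iff] at hx1
      have hvb' : H.Reachable v b := hvd'.reachable.trans hbd.symm
      rcases hx1 with ⟨rfl, rfl⟩ | ⟨rfl, rfl⟩
      · exact hvb'
      · exact hvb'.symm
    · by_cases hx2 : s(x, y) = s(w, d')
      · rw [Sym2.eq_iff] at hx2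
        have hwd : H.Reachable w d' := hwbadj.reachable.trans hbd
        rcases hx2 with ⟨rfl, rfl⟩ | ⟨rfl, rfl⟩
        · exact hwd
        · exact hwd.symm
      · refine SimpleGraph.Adj.reachable ?_
        rw [hH, swapGraph, fromEdgeSet_adj]
        exact ⟨Set.mem_union_left _ ⟨G.mem_edgeSet.mpr hxy, by simp [hx1, hx2]⟩, hxy.ne⟩
  have hpre : H.Preconnected := fun x y => reach_of_reach hedge (hconn x y).some
  haveI := hconn.nonempty
  exact Connected.mk hpre

lemma exists_valid_swap {V : Type*} {G : SimpleGraph V} (hconn : G.Connected)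
    {v w : V} (hd : 3 ≤ G.dist v w) : ∃ b d, IsValidSwap G v b w d := by
  obtain ⟨p, hp⟩ := hconn.exists_walk_length_eq_dist v w
  have hpath : p.IsPath := p.isPath_of_length_eq_dist hp
  rcases p with _ | ⟨hvb, q⟩
  · rw [← hp] at hd; simp only [Walk.length_nil] at hd; omega
  rename_i b
  rcases q with _ | ⟨hb2, q2⟩
  · rw [← hp] at hd; simp only [Walk.length_cons, Walk.length_nil] at hd; omega
  obtain ⟨d', r, hdw, hq⟩ := Walk.exists_cons_eq_concat hb2 q2
  -- now p = cons hvb (r.concat hdw), r : G.Walk b d', hdw : G.Adj d' w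
  rw [hq] at hp hpath
  have hlen : (Walk.cons hvb (r.concat hdw)).length = G.dist v w := hp
  have hedges : (Walk.cons hvb (r.concat hdw)).edges.Nodup := hpath.edges_nodup
  rw [Walk.edges_cons, Walk.edges_concat, List.concat_eq_append, List.nodup_cons, List.nodup_append] at hedges
  have h1 : s(v, b) ∉ r.edges := fun h => hedges.1 (List.mem_append_left _ h)
  have h2 : s(d', w) ∉ r.edges := by
    intro h
    exact hedges.2.2.2 _ h _ (List.mem_singleton_self _) rfl
  have hdb : G.dist v b ≤ 1 := by
    have := G.dist_le hvb.toWalk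
    simpa using this
  have hdd : G.dist d' w ≤ 1 := by
    have := G.dist_le hdw.toWalk
    simpa using this
  have htri1 : G.dist v w ≤ G.dist v d' + G.dist d' w := hconn.dist_triangle
  have htri2 : G.dist v w ≤ G.dist v b + G.dist b w := hconn.dist_triangle
  have hvd2 : 2 ≤ G.dist v d' := by omega
  have hbw2 : 2 ≤ G.dist b w := by omega
  have hvd : v ≠ d' := by
    rintro rfl; rw [SimpleGraph.dist_self] at hvd2; omega
  have hwb : w ≠ b := by
    rintro rfl; rw [SimpleGraph.dist_self] at hbw2; omega
  have hnvd : ¬ G.Adj v d' := fun h => by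
    rw [← SimpleGraph.dist_eq_one_iff_adj] at h; omega
  have hnwb : ¬ G.Adj w b := fun h => by
    rw [SimpleGraph.dist_comm] at hbw2
    rw [← SimpleGraph.dist_eq_one_iff_adj] at h; omega
  exact ⟨b, d', hvb, hdw.symm, hvd, hwb, hnvd, hnwb,
    swap_connected hconn r hvb hdw hvd hwb h1 h2⟩

theorem valid_swap_probability {V : Type*} [Fintype V] [DecidableEq V]
    (G : SimpleGraph V) [DecidableRel G.Adj] (hconn : G.Connected)
    (n m : ℕ) (hn : n = Fintype.card V) (hm : m = G.edgeFinset.card)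
    (hm2 : 2 ≤ m)
    (z ρ : ℝ) (hz : z = 2 * (m : ℝ) / n) (hρ : 0 < ρ)
    (hpairs : (({q : V × V | q.1 ≠ q.2 ∧ 3 ≤ G.dist q.1 q.2}).ncard : ℝ) =
      ρ * (n * (n - 1))) :
    ρ * n * (n - 1) / 8 ≤ ((validSwaps G).ncard : ℝ) ∧
    ρ / (2 * z * (z + 1)) ≤ ((validSwaps G).ncard : ℝ) / (m * (m - 1)) := by
  classical
  set S : Set (V × V) := {q : V × V | q.1 ≠ q.2 ∧ 3 ≤ G.dist q.1 q.2} with hS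
  have hSfin : S.Finite := Set.toFinite _
  have hTfin : (validSwaps G).Finite := Set.toFinite _
  set F : V × V → Sym2 V × Sym2 V := fun q =>
    if h : ∃ b d, IsValidSwap G q.1 b q.2 d then
      (s(q.1, h.choose), s(q.2, h.choose_spec.choose)) else (s(q.1, q.1), s(q.1, q.1)) with hF
  have hFmem : ∀ q ∈ S, F q ∈ validSwaps G ∧ q.1 ∈ (F q).1 ∧ q.2 ∈ (F q).2 := by
    intro q hq
    have hex : ∃ b d, IsValidSwap G q.1 b q.2 d := exists_valid_swap hconn hq.2
    rw [hF]
    simp only [dif_pos hex]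
    exact ⟨⟨q.1, hex.choose, q.2, hex.choose_spec.choose, rfl, rfl,
      hex.choose_spec.choose_spec⟩, Sym2.mem_mk_left _ _, Sym2.mem_mk_left _ _⟩
  have hcard : S.ncard ≤ 8 * (validSwaps G).ncard := by
    rw [Set.ncard_eq_toFinset_card S hSfin,
      Set.ncard_eq_toFinset_card (validSwaps G) hTfin]
    have himg : hSfin.toFinset.image F ⊆ hTfin.toFinset := by
      intro e he
      rw [Finset.mem_image] at he
      obtain ⟨q, hq, rfl⟩ := he
      exact hTfin.mem_toFinset.mpr (hFmem q (hSfin.mem_toFinset.mp hq)).1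
    have hfib : ∀ ef ∈ hSfin.toFinset.image F,
        (hSfin.toFinset.filter fun q => F q = ef).card ≤ 8 := by
      intro ef _
      have hsub : hSfin.toFinset.filter (fun q => F q = ef) ⊆
          (Finset.univ.filter (· ∈ ef.1)) ×ˢ (Finset.univ.filter (· ∈ ef.2)) := by
        intro q hq
        rw [Finset.mem_filter] at hq
        obtain ⟨h1, h2⟩ := hq
        obtain ⟨-, hm1, hm2⟩ := hFmem q (hSfin.mem_toFinset.mp h1)
        rw [h2] at hm1 hm2
        simp only [Finset.mem_product, Finset.mem_filter, Finset.mem_univ, true_and]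
        exact ⟨hm1, hm2⟩
      refine (Finset.card_le_card hsub).trans ?_
      rw [Finset.card_product]
      have b1 : ∀ e : Sym2 V, (Finset.univ.filter (· ∈ e)).card ≤ 2 := by
        intro e
        refine Sym2.ind (fun x y => ?_) e
        have : (Finset.univ.filter (· ∈ s(x, y))) ⊆ {x, y} := by
          intro a ha
          rw [Finset.mem_filter] at ha
          have := ha.2
          rw [Sym2.mem_iff] at this
          simpa [Finset.mem_insert, Finset.mem_singleton] using this
        refine (Finset.card_le_card this).trans ?_
        refine (Finset.card_insert_le _ _).trans ?_
        simp
      calc _ ≤ 2 * 2 := Nat.mul_le_mul (b1 _) (b1 _)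
        _ ≤ 8 := by norm_num
    have := Finset.card_le_mul_card_image hSfin.toFinset 8 hfib
    exact this.trans (Nat.mul_le_mul_left 8 (Finset.card_le_card himg))
  set N : ℕ := (validSwaps G).ncard with hN
  have hcardR : (S.ncard : ℝ) ≤ 8 * N := by exact_mod_cast hcard
  have first : ρ * n * (n - 1) / 8 ≤ (N : ℝ) := by
    rw [hpairs] at hcardR
    linarith
  refine ⟨first, ?_⟩
  -- facts about n, m
  have hmn : 2 * m ≤ n * (n - 1) := by
    have h1 : m ≤ (Fintype.card V).choose 2 := hm ▸ G.card_edgeFinset_le_card_choose_two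
    rw [← hn, Nat.choose_two_right] at h1
    omega
  have hn3 : 3 ≤ n := by by_contra h; push_neg at h; interval_cases n <;> omega
  have hnR : (3:ℝ) ≤ n := by exact_mod_cast hn3
  have hmR : (2:ℝ) ≤ m := by exact_mod_cast hm2
  have hcast : 2 * (m:ℝ) ≤ (n:ℝ) * ((n:ℝ) - 1) := by
    have : ((2 * m : ℕ) : ℝ) ≤ ((n * (n - 1) : ℕ) : ℝ) := by exact_mod_cast hmn
    push_cast [Nat.cast_sub (by omega : 1 ≤ n)] at this
    linarith
  have hn0 : (0:ℝ) < n := by linarith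
  have hz0 : 0 < z := by rw [hz]; positivity
  have hz1 : 0 < 2 * z * (z + 1) := by positivity
  have hmm : (0:ℝ) < (m:ℝ) * ((m:ℝ) - 1) := by nlinarith
  rw [div_le_div_iff₀ hz1 hmm]
  have key2 : ρ * ((m:ℝ) * ((m:ℝ) - 1)) ≤ ρ * ((n:ℝ) * ((n:ℝ) - 1)) / 8 * (2 * z * (z + 1)) := by
    rw [hz]
    have hq : (0:ℝ) ≤ ((n:ℝ) - 1) * (2 * (m:ℝ) + n) - 2 * n * ((m:ℝ) - 1) := by nlinarith [hcast]
    have expand : ρ * ((n:ℝ) * ((n:ℝ) - 1)) / 8 * (2 * (2 * (m:ℝ) / n) * (2 * (m:ℝ) / n + 1))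
        - ρ * ((m:ℝ) * ((m:ℝ) - 1))
        = ρ * (m:ℝ) * (((n:ℝ) - 1) * (2 * (m:ℝ) + n) - 2 * n * ((m:ℝ) - 1)) / (2 * n) := by
      field_simp
      ring
    have hpos : (0:ℝ) ≤ ρ * (m:ℝ) * (((n:ℝ) - 1) * (2 * (m:ℝ) + n) - 2 * n * ((m:ℝ) - 1)) / (2 * n) := by
      apply div_nonneg _ (by linarith)
      exact mul_nonneg (mul_nonneg hρ.le (by linarith)) hq
    linarith [expand ▸ hpos]
  calc ρ * ((m:ℝ) * ((m:ℝ) - 1)) ≤ ρ * ((n:ℝ) * ((n:ℝ) - 1)) / 8 * (2 * z * (z + 1)) := key2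
    _ ≤ (N : ℝ) * (2 * z * (z + 1)) := by
        apply mul_le_mul_of_nonneg_right _ hz1.le
        linarith [first]
end
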